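/- arXiv:quant-ph/0504208 — 6 statements merged into one kernel-verified Lean document; each statement's English description precedes it below -/
import Mathlib

section
/- Suppose n qubits (coordinates) are distributed among a set of parties M, with G^n = ⊕_{α∈M} G^n_α the corresponding direct-sum decomposition of F_2^{2n}, and let S ⊆ G^n be a self-dual subspace under the standard symplectic form ω. For each α ∈ M define S_α = S ∩ G^n_α (local subgroup) and S_{α̂} = {g ∈ S : g_α = 0} (co-local subgroup). Suppose S_α = 0 for all α ∈ M (full local ranks), and let T : S → S' be a linear invertible map between self-dual subspaces S, S' ⊆ G^n with S'_α = 0 for all α ∈ M, satisfying ω(T(f)_α, T(g)_α) = ω(f_α, g_α) for all f, g ∈ S and all α ∈ M. Then T maps co-local subgroups onto co-local subgroups: T(S_{α̂}) = S'_{α̂} for every α ∈ M. -/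
/-- The phase space of `ι`-indexed qubits: `G^ι = (F_2 × F_2)^ι`. -/
abbrev PV (ι : Type*) := ι → ZMod 2 × ZMod 2

/-- The standard symplectic form `ω(f,g) = Σ_j (f_j^x g_j^z + f_j^z g_j^x)`. -/
noncomputable def sympForm (ι : Type*) [Fintype ι] :
    LinearMap.BilinForm (ZMod 2) (PV ι) :=
  LinearMap.mk₂ (ZMod 2)
    (fun f g => ∑ j, ((f j).1 * (g j).2 + (f j).2 * (g j).1))
    (fun m₁ m₂ g => by
      rw [← Finset.sum_add_distrib]
      exact Finset.sum_congr rfl fun j _ => by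
        simp only [Pi.add_apply, Prod.fst_add, Prod.snd_add]; ring)
    (fun c m g => by
      simp only [Pi.smul_apply, Prod.smul_fst, Prod.smul_snd, smul_eq_mul]
      rw [Finset.mul_sum]
      exact Finset.sum_congr rfl fun j _ => by ring)
    (fun m g₁ g₂ => by
      rw [← Finset.sum_add_distrib]
      exact Finset.sum_congr rfl fun j _ => by
        simp only [Pi.add_apply, Prod.fst_add, Prod.snd_add]; ring)
    (fun c m g => by
      simp only [Pi.smul_apply, Prod.smul_fst, Prod.smul_snd, smul_eq_mul]
      rw [Finset.mul_sum]
      exact Finset.sum_congr rfl fun j _ => by ring)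

/-- The restriction of the symplectic form to the coordinates in `A`:
`ω(f_A, g_A)`. -/
def sympOn {ι : Type*} (A : Finset ι) (f g : PV ι) : ZMod 2 :=
  ∑ j ∈ A, ((f j).1 * (g j).2 + (f j).2 * (g j).1)

/-- The set of qubits owned by party `α`. -/
def partySet {ι M : Type*} [Fintype ι] [DecidableEq M] (party : ι → M) (α : M) :
    Finset ι := Finset.univ.filter (fun j => party j = α)

/-- The local subspace `G^n_α` of vectors supported on party `α`'s qubits. -/
def localSub {ι M : Type*} (party : ι → M) (α : M) :
    Submodule (ZMod 2) (PV ι) where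
  carrier := {f | ∀ j, party j ≠ α → f j = 0}
  add_mem' := fun hf hg j hj => by
    simp only [Pi.add_apply, hf j hj, hg j hj, add_zero]
  zero_mem' := fun j _ => rfl
  smul_mem' := fun c f hf j hj => by
    simp only [Pi.smul_apply, hf j hj, smul_zero]

/-- The co-local subgroup `S_α̂` of elements of `S` acting trivially on party `α`. -/
def colocalSub {ι M : Type*} (S : Submodule (ZMod 2) (PV ι)) (party : ι → M) (α : M) :
    Submodule (ZMod 2) (PV ι) :=
  S ⊓ { carrier := {f | ∀ j, party j = α → f j = 0}
        add_mem' := fun hf hg j hj => by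
          simp only [Pi.add_apply, hf j hj, hg j hj, add_zero]
        zero_mem' := fun j _ => rfl
        smul_mem' := fun c f hf j hj => by
          simp only [Pi.smul_apply, hf j hj, smul_zero] }

/-- `S_loc`, the sum of all co-local subgroups of `S`. -/
def Sloc {ι M : Type*} (S : Submodule (ZMod 2) (PV ι)) (party : ι → M) :
    Submodule (ZMod 2) (PV ι) :=
  ⨆ α : M, colocalSub S party α

/-- The subspace `L_α = {f ∈ G^n_α : ω(f, S_loc) = 0}`. -/
noncomputable def Lsub {ι M : Type*} [Fintype ι] (S : Submodule (ZMod 2) (PV ι))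
    (party : ι → M) (α : M) : Submodule (ZMod 2) (PV ι) :=
  localSub party α ⊓ LinearMap.BilinForm.orthogonal (sympForm ι) (Sloc S party)

lemma colocal_key {n : ℕ} {M : Type*} [DecidableEq M]
    (party : Fin n → M) (S : Submodule (ZMod 2) (PV (Fin n)))
    (hsd : S = LinearMap.BilinForm.orthogonal (sympForm (Fin n)) S)
    (hfull : ∀ α, S ⊓ localSub party α = ⊥)
    (α : M) (g : PV (Fin n)) (_hg : g ∈ S) :
    (∀ j, party j = α → g j = 0) ↔
      ∀ f ∈ S, sympOn (partySet party α) f g = 0 := by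
  constructor
  · intro h f _
    apply Finset.sum_eq_zero
    intro j hj
    have hjα : party j = α := by simpa [partySet] using hj
    rw [h j hjα]
    simp
  · intro h
    set hvec : PV (Fin n) := fun j => if party j = α then g j else 0 with hdef
    have hloc : hvec ∈ localSub party α := by
      intro j hj; simp [hdef, hj]
    have horth : hvec ∈ LinearMap.BilinForm.orthogonal (sympForm (Fin n)) S := by
      intro f hf
      show sympForm (Fin n) f hvec = 0
      have hcalc : sympForm (Fin n) f hvec = sympOn (partySet party α) f g := by
        simp only [sympForm, LinearMap.mk₂_apply, sympOn, partySet]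
        rw [← Finset.sum_filter_add_sum_filter_not Finset.univ (fun j => party j = α)]
        have h2 : ∑ j ∈ Finset.univ.filter (fun j => ¬ party j = α),
            ((f j).1 * (hvec j).2 + (f j).2 * (hvec j).1) = 0 := by
          apply Finset.sum_eq_zero
          intro j hj
          have : ¬ party j = α := (Finset.mem_filter.mp hj).2
          simp [hdef, this]
        rw [h2, add_zero]
        apply Finset.sum_congr rfl
        intro j hj
        have : party j = α := (Finset.mem_filter.mp hj).2
        simp [hdef, this]
      rw [hcalc]
      exact h f hf
    have hmem : hvec ∈ S ⊓ localSub party α := ⟨hsd ▸ horth, hloc⟩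
    rw [hfull α] at hmem
    intro j hj
    have := congrFun (Submodule.mem_bot (ZMod 2) |>.mp hmem) j
    simpa [hdef, hj] using this

/-- A linear invertible map between self-dual subspaces with full
local ranks that preserves local commutation relations maps co-local subgroups
onto co-local subgroups. -/
theorem colocal_preserved {n : ℕ} {M : Type*} [Fintype M] [DecidableEq M]
    (party : Fin n → M) (S S' : Submodule (ZMod 2) (PV (Fin n)))
    (hsd : S = LinearMap.BilinForm.orthogonal (sympForm (Fin n)) S)
    (hsd' : S' = LinearMap.BilinForm.orthogonal (sympForm (Fin n)) S')
    (hfull : ∀ α, S ⊓ localSub party α = ⊥)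
    (hfull' : ∀ α, S' ⊓ localSub party α = ⊥)
    (T : S →ₗ[ZMod 2] S') (hTbij : Function.Bijective T)
    (hTloc : ∀ (f g : S) (α : M),
      sympOn (partySet party α) (T f : PV (Fin n)) (T g : PV (Fin n)) =
        sympOn (partySet party α) (f : PV (Fin n)) (g : PV (Fin n))) :
    ∀ (α : M) (g : S),
      ((∀ j, party j = α → (g : PV (Fin n)) j = 0) ↔
        (∀ j, party j = α → (T g : PV (Fin n)) j = 0)) := by
  intro α g
  rw [colocal_key party S hsd hfull α g g.2,
    colocal_key party S' hsd' hfull' α (T g : PV (Fin n)) (T g).2]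
  constructor
  · intro h f' hf'
    obtain ⟨f, hf⟩ := hTbij.2 ⟨f', hf'⟩
    have h1 := hTloc f g α
    rw [hf] at h1
    exact h1.trans (h (f : PV (Fin n)) f.2)
  · intro h f hf
    have h1 := hTloc ⟨f, hf⟩ g α
    rw [← h1]
    exact h _ (T ⟨f, hf⟩).2
end

section
/- Let S ⊆ G^n = F_2^{2n} be a self-dual subspace under the standard symplectic form, with coordinates partitioned among a set of parties M with |M| ≥ 2. Suppose S has full local ranks (S_α = 0 for all α). Let S_loc = Σ_{α∈M} S_{α̂} be the sum of all co-local subgroups, and fix any complement S_ent with S = S_loc ⊕ S_ent. For each α ∈ M define L_α = {f ∈ G^n_α : ω(f,g) = 0 for all g ∈ S_loc}. Then the bilinear form η_α : L_α × S_ent → F_2 given by η_α(f,g) = ω(f_α, g_α) is nondegenerate in both arguments, and consequently dim(L_α) = dim(S) − dim(S_loc) for every α ∈ M. -/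
section Aux

lemma sympForm_apply {ι : Type*} [Fintype ι] (f g : PV ι) :
    sympForm ι f g = ∑ j, ((f j).1 * (g j).2 + (f j).2 * (g j).1) := rfl

lemma sympForm_comm {ι : Type*} [Fintype ι] (f g : PV ι) :
    sympForm ι f g = sympForm ι g f := by
  simp only [sympForm_apply]
  exact Finset.sum_congr rfl fun j _ => by ring

lemma sympForm_single {ι : Type*} [Fintype ι] [DecidableEq ι] (j : ι) (a b : ZMod 2)
    (f : PV ι) : sympForm ι (Pi.single j (a, b)) f = a * (f j).2 + b * (f j).1 := by
  rw [sympForm_apply, Finset.sum_eq_single j]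
  · simp
  · intro i _ hij
    simp [Pi.single_eq_of_ne hij]
  · simp

lemma sympForm_nondeg {ι : Type*} [Fintype ι] [DecidableEq ι] :
    (sympForm ι).Nondegenerate := by
  suffices hL : LinearMap.SeparatingLeft (sympForm ι) from
    ⟨hL, fun f hf => hL f fun g => by rw [sympForm_comm]; exact hf g⟩
  intro f hf
  funext j
  have h1 := hf (Pi.single j ((0 : ZMod 2), (1 : ZMod 2)))
  have h2 := hf (Pi.single j ((1 : ZMod 2), (0 : ZMod 2)))
  rw [sympForm_comm, sympForm_single] at h1 h2
  simp only [zero_mul, one_mul, zero_add, add_zero] at h1 h2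
  exact Prod.ext h1 h2

lemma sympOn_eq_sympForm {ι M : Type*} [Fintype ι] [DecidableEq M] (party : ι → M) (α : M)
    {f : PV ι} (hf : f ∈ localSub party α) (g : PV ι) :
    sympOn (partySet party α) f g = sympForm ι f g := by
  unfold sympOn
  rw [sympForm_apply]
  refine Finset.sum_subset (Finset.subset_univ _) ?_
  intro j _ hj
  have hne : party j ≠ α := by simpa [partySet] using hj
  rw [hf j hne]
  simp

/-- Vectors vanishing on party `α`'s qubits. -/
def coSupp {ι M : Type*} (party : ι → M) (α : M) : Submodule (ZMod 2) (PV ι) where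
  carrier := {f | ∀ j, party j = α → f j = 0}
  add_mem' := fun hf hg j hj => by
    simp only [Pi.add_apply, hf j hj, hg j hj, add_zero]
  zero_mem' := fun j _ => rfl
  smul_mem' := fun c f hf j hj => by
    simp only [Pi.smul_apply, hf j hj, smul_zero]

lemma mem_localSub_of_orth {ι M : Type*} [Fintype ι] [DecidableEq ι] (party : ι → M) (α : M)
    {f : PV ι} (hf : ∀ h ∈ coSupp party α, sympForm ι f h = 0) : f ∈ localSub party α := by
  intro j hj
  have hmem : ∀ v : ZMod 2 × ZMod 2, Pi.single j v ∈ coSupp party α := by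
    intro v i hi
    rcases eq_or_ne i j with rfl | hne
    · exact absurd hi hj
    · exact Pi.single_eq_of_ne hne _
  have h1 := hf _ (hmem ((0 : ZMod 2), (1 : ZMod 2)))
  have h2 := hf _ (hmem ((1 : ZMod 2), (0 : ZMod 2)))
  rw [← sympForm_comm, sympForm_single] at h1 h2
  simp only [zero_mul, one_mul, zero_add, add_zero] at h1 h2
  exact Prod.ext h1 h2

end Aux

set_option maxHeartbeats 1000000

/-- For a self-dual `S` with full local ranks and a decomposition
`S = S_loc ⊕ S_ent`, the pairing `η_α(f,g) = ω(f_α, g_α)` between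
`L_α` and `S_ent` is nondegenerate in both arguments, and
`dim L_α = dim S − dim S_loc` for every party `α`. -/
theorem Lsub_pairing_nondegenerate {n : ℕ} {M : Type*} [Fintype M] [DecidableEq M]
    (party : Fin n → M) (hM : 2 ≤ Fintype.card M)
    (S Sent : Submodule (ZMod 2) (PV (Fin n)))
    (hsd : S = LinearMap.BilinForm.orthogonal (sympForm (Fin n)) S)
    (hfull : ∀ α, S ⊓ localSub party α = ⊥)
    (hsum : Sloc S party ⊔ Sent = S)
    (hdisj : Sloc S party ⊓ Sent = ⊥)
    (α : M) :
    (∀ f ∈ Lsub S party α,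
        (∀ g ∈ Sent, sympOn (partySet party α) f g = 0) → f = 0) ∧
    (∀ g ∈ Sent,
        (∀ f ∈ Lsub S party α, sympOn (partySet party α) f g = 0) → g = 0) ∧
    Module.finrank (ZMod 2) (Lsub S party α) =
      Module.finrank (ZMod 2) S - Module.finrank (ZMod 2) (Sloc S party) := by
  classical
  have hnd : (sympForm (Fin n)).Nondegenerate := sympForm_nondeg
  have hSloc_le : Sloc S party ≤ S := iSup_le fun β => inf_le_left
  have hSent_le : Sent ≤ S := by
    rw [← hsum]; exact le_sup_right
  have hScoSupp : ∀ g, g ∈ S → g ∈ coSupp party α → g ∈ Sloc S party := by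
    intro g hgS hgc
    exact Submodule.mem_iSup_of_mem α ⟨hgS, hgc⟩
  -- Part 1: left nondegeneracy
  have h1 : ∀ f ∈ Lsub S party α,
      (∀ g ∈ Sent, sympOn (partySet party α) f g = 0) → f = 0 := by
    intro f hf hη
    obtain ⟨hfloc, hforth⟩ := hf
    have hfS : f ∈ S := by
      rw [hsd]
      intro g hg
      rw [sympForm_comm]
      have hg' : g ∈ Sloc S party ⊔ Sent := by rw [hsum]; exact hg
      obtain ⟨s, hs, e, he, rfl⟩ := Submodule.mem_sup.mp hg'
      have ha : sympForm (Fin n) f s = 0 := by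
        rw [sympForm_comm]; exact hforth s hs
      have hb : sympForm (Fin n) f e = 0 := by
        rw [← sympOn_eq_sympForm party α hfloc]; exact hη e he
      rw [map_add, ha, hb, add_zero]
    have : f ∈ S ⊓ localSub party α := ⟨hfS, hfloc⟩
    rw [hfull α] at this
    simpa using this
  -- The complement `W = S_loc + Ĝ_α` is disjoint from `S_ent`
  set W : Submodule (ZMod 2) (PV (Fin n)) := Sloc S party ⊔ coSupp party α with hWdef
  have hWE : W ⊓ Sent = ⊥ := by
    rw [Submodule.eq_bot_iff]
    rintro g ⟨hgW, hgE⟩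
    obtain ⟨s, hs, h, hh, rfl⟩ := Submodule.mem_sup.mp hgW
    have hhS : h ∈ S := by
      have h2 : s + h ∈ S := hSent_le hgE
      have h3 : s ∈ S := hSloc_le hs
      simpa using S.sub_mem h2 h3
    have hhloc : h ∈ Sloc S party := hScoSupp h hhS hh
    have hmem : s + h ∈ Sloc S party ⊓ Sent :=
      ⟨(Sloc S party).add_mem hs hhloc, hgE⟩
    rw [hdisj] at hmem
    simpa using hmem
  -- Surjectivity of the pairing map onto the dual of `S_ent`
  have hsurj : ∀ φ : Module.Dual (ZMod 2) Sent, ∃ f, f ∈ Lsub S party α ∧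
      ∀ g : Sent, sympForm (Fin n) f (g : PV (Fin n)) = φ g := by
    intro φ
    set q : Sent →ₗ[ZMod 2] PV (Fin n) ⧸ W := W.mkQ.comp Sent.subtype with hqdef
    have hqinj : Function.Injective q := by
      rw [← LinearMap.ker_eq_bot, Submodule.eq_bot_iff]
      intro x hx
      have hxW : (x : PV (Fin n)) ∈ W := by
        have : W.mkQ (x : PV (Fin n)) = 0 := hx
        simpa [Submodule.Quotient.mk_eq_zero] using this
      have hmem : (x : PV (Fin n)) ∈ W ⊓ Sent := ⟨hxW, x.2⟩
      rw [hWE] at hmem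
      exact Subtype.ext (by simpa using hmem)
    set e := LinearEquiv.ofInjective q hqinj with hedef
    obtain ⟨Ψ, hΨ⟩ := LinearMap.exists_extend
      (φ.comp (e.symm : LinearMap.range q →ₗ[ZMod 2] Sent))
    set ψ : Module.Dual (ZMod 2) (PV (Fin n)) := Ψ.comp W.mkQ with hψdef
    have hψW : ∀ w ∈ W, ψ w = 0 := by
      intro w hw
      have : W.mkQ w = 0 := (Submodule.Quotient.mk_eq_zero W).mpr hw
      simp only [hψdef, LinearMap.comp_apply, this, map_zero]
    have hψE : ∀ g : Sent, ψ (g : PV (Fin n)) = φ g := by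
      intro g
      have hrange : q g ∈ LinearMap.range q := LinearMap.mem_range_self q g
      have h2 : (⟨q g, hrange⟩ : LinearMap.range q) = e g := rfl
      calc ψ (g : PV (Fin n))
          = Ψ ((LinearMap.range q).subtype ⟨q g, hrange⟩) := rfl
        _ = (φ.comp (e.symm : LinearMap.range q →ₗ[ZMod 2] Sent)) ⟨q g, hrange⟩ := by
            rw [← LinearMap.comp_apply, hΨ]
        _ = φ (e.symm (e g)) := by rw [h2]; rfl
        _ = φ g := by rw [LinearEquiv.symm_apply_apply]
    refine ⟨((sympForm (Fin n)).toDual hnd).symm ψ, ?_, ?_⟩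
    · constructor
      · refine mem_localSub_of_orth party α fun h hh => ?_
        rw [LinearMap.BilinForm.apply_toDual_symm_apply]
        exact hψW h (Submodule.mem_sup_right hh)
      · intro s hs
        rw [sympForm_comm,
          LinearMap.BilinForm.apply_toDual_symm_apply]
        exact hψW s (Submodule.mem_sup_left hs)
    · intro g
      rw [LinearMap.BilinForm.apply_toDual_symm_apply]
      exact hψE g
  -- The pairing as a linear map into the dual
  set Φ : (Lsub S party α) →ₗ[ZMod 2] Module.Dual (ZMod 2) Sent :=
    (sympForm (Fin n)).domRestrict₁₂ (Lsub S party α) Sent with hΦdef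
  have hΦinj : Function.Injective Φ := by
    rw [← LinearMap.ker_eq_bot, Submodule.eq_bot_iff]
    intro x hx
    have hx0 : ∀ g : Sent, sympForm (Fin n) (x : PV (Fin n)) (g : PV (Fin n)) = 0 := by
      intro g
      exact LinearMap.congr_fun (hx : Φ x = 0) g
    refine Subtype.ext (h1 x x.2 fun g hg => ?_)
    rw [sympOn_eq_sympForm party α x.2.1]
    exact hx0 ⟨g, hg⟩
  have hΦsurj : Function.Surjective Φ := by
    intro φ
    obtain ⟨f, hfL, hfω⟩ := hsurj φ
    exact ⟨⟨f, hfL⟩, LinearMap.ext fun g => hfω g⟩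
  refine ⟨h1, ?_, ?_⟩
  · -- Part 2: right nondegeneracy
    intro g hg hfg
    have hall : ∀ φ : Module.Dual (ZMod 2) Sent, φ ⟨g, hg⟩ = 0 := by
      intro φ
      obtain ⟨x, hx⟩ := hΦsurj φ
      rw [← hx]
      show sympForm (Fin n) (x : PV (Fin n)) g = 0
      rw [← sympOn_eq_sympForm party α x.2.1]
      exact hfg x x.2
    have h0 := (Module.forall_dual_apply_eq_zero_iff (ZMod 2)
      (⟨g, hg⟩ : Sent)).mp hall
    simpa using congrArg Subtype.val h0
  · -- Part 3: dimension count
    have e2 : Module.finrank (ZMod 2) (Lsub S party α) = Module.finrank (ZMod 2) Sent := by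
      rw [(LinearEquiv.ofBijective Φ ⟨hΦinj, hΦsurj⟩).finrank_eq,
        Subspace.dual_finrank_eq]
    have hadd := Submodule.finrank_sup_add_finrank_inf_eq (Sloc S party) Sent
    rw [hsum, hdisj, finrank_bot] at hadd
    have hle : Module.finrank (ZMod 2) (Sloc S party) ≤ Module.finrank (ZMod 2) S :=
      Submodule.finrank_mono hSloc_le
    omega
end

section
/- Let S ⊆ G^n = F_2^{2n} be self-dual with coordinates partitioned among parties {A,B,C}, full local ranks, and S = S_{Â} ⊕ S_{B̂} ⊕ S_{Ĉ}. Let R = S_{Ĉ} and define η : R × R → F_2 by η(f,g) = ω(f_A, g_A), where f_A is the projection onto party A's coordinates. Then η is a nondegenerate alternating form on R; consequently dim(S_{Ĉ}) is even. -/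
section Aux

open Finset

/-- the bilinear form `(f,g) ↦ ω(f_A, g_A)` on the whole phase space. -/
def sympOnForm {ι : Type*} (A : Finset ι) : LinearMap.BilinForm (ZMod 2) (PV ι) :=
  LinearMap.mk₂ (ZMod 2)
    (fun f g => ∑ j ∈ A, ((f j).1 * (g j).2 + (f j).2 * (g j).1))
    (fun m₁ m₂ g => by
      rw [← Finset.sum_add_distrib]
      exact Finset.sum_congr rfl fun j _ => by
        simp only [Pi.add_apply, Prod.fst_add, Prod.snd_add]; ring)
    (fun c m g => by
      simp only [Pi.smul_apply, Prod.smul_fst, Prod.smul_snd, smul_eq_mul]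
      rw [Finset.mul_sum]
      exact Finset.sum_congr rfl fun j _ => by ring)
    (fun m g₁ g₂ => by
      rw [← Finset.sum_add_distrib]
      exact Finset.sum_congr rfl fun j _ => by
        simp only [Pi.add_apply, Prod.fst_add, Prod.snd_add]; ring)
    (fun c m g => by
      simp only [Pi.smul_apply, Prod.smul_fst, Prod.smul_snd, smul_eq_mul]
      rw [Finset.mul_sum]
      exact Finset.sum_congr rfl fun j _ => by ring)

lemma sympOnForm_apply {ι : Type*} (A : Finset ι) (f g : PV ι) :
    sympOnForm A f g = sympOn A f g := rfl

lemma sympOn_comm {ι : Type*} (A : Finset ι) (f g : PV ι) :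
    sympOn A f g = sympOn A g f :=
  Finset.sum_congr rfl fun j _ => by ring

lemma sympOn_self {ι : Type*} (A : Finset ι) (f : PV ι) : sympOn A f f = 0 :=
  Finset.sum_eq_zero fun j _ => by
    rw [mul_comm (f j).2 (f j).1]
    exact CharTwo.add_self_eq_zero _

lemma sympOn_eq_zero_left {ι : Type*} {A : Finset ι} {f : PV ι}
    (hf : ∀ j ∈ A, f j = 0) (g : PV ι) : sympOn A f g = 0 :=
  Finset.sum_eq_zero fun j hj => by rw [hf j hj]; simp

lemma sympOn_eq_zero_right {ι : Type*} {A : Finset ι} {g : PV ι}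
    (hg : ∀ j ∈ A, g j = 0) (f : PV ι) : sympOn A f g = 0 :=
  Finset.sum_eq_zero fun j hj => by rw [hg j hj]; simp

lemma sympForm_eq_sum_parties {n : ℕ} (party : Fin n → Fin 3) (f g : PV (Fin n)) :
    sympForm (Fin n) f g = ∑ α : Fin 3, sympOn (partySet party α) f g := by
  show (∑ j, ((f j).1 * (g j).2 + (f j).2 * (g j).1)) = _
  rw [← Finset.sum_fiberwise Finset.univ party
    (fun j => ((f j).1 * (g j).2 + (f j).2 * (g j).1))]
  rfl

lemma mem_partySet {n : ℕ} {party : Fin n → Fin 3} {α : Fin 3} {j : Fin n} :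
    j ∈ partySet party α ↔ party j = α := by
  simp [partySet]

lemma mem_colocalSub {n : ℕ} {S : Submodule (ZMod 2) (PV (Fin n))}
    {party : Fin n → Fin 3} {α : Fin 3} {f : PV (Fin n)} :
    f ∈ colocalSub S party α ↔ f ∈ S ∧ ∀ j, party j = α → f j = 0 :=
  Iff.rfl

lemma even_finrank_of_alt_nondeg {K : Type*} [Field K] :
    ∀ (k : ℕ) {V : Type*} [AddCommGroup V] [Module K V] [FiniteDimensional K V]
      (B : LinearMap.BilinForm K V), Module.finrank K V = k →
      B.IsAlt → B.Nondegenerate → Even k := by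
  intro k
  induction k using Nat.strong_induction_on with
  | _ k IH =>
    intro V _ _ _ B hk halt hnd
    rcases Nat.eq_zero_or_pos k with hk0 | hkpos
    · simp [hk0]
    · have : 0 < Module.finrank K V := hk ▸ hkpos
      have : Nontrivial V := Module.nontrivial_of_finrank_pos this
      obtain ⟨x, hx⟩ := exists_ne (0 : V)
      have hxy : ∃ y, B x y ≠ 0 := by
        by_contra h
        push_neg at h
        exact hx (hnd.1 x h)
      obtain ⟨y, hxy⟩ := hxy
      have hrefl : B.IsRefl := halt.isRefl
      -- x, y linearly independent
      have hli : LinearIndependent K ![x, y] := by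
        rw [LinearIndependent.pair_iff]
        intro s t hst
        have h1 : B x (s • x + t • y) = 0 := by rw [hst]; simp
        rw [map_add, map_smul, map_smul, halt x, smul_zero, zero_add, smul_eq_mul] at h1
        have ht : t = 0 := by
          rcases mul_eq_zero.mp h1 with h | h
          · exact h
          · exact absurd h hxy
        subst ht
        rw [zero_smul, add_zero] at hst
        rcases smul_eq_zero.mp hst with h | h
        · exact ⟨h, rfl⟩
        · exact absurd h hx
      set W : Submodule K V := Submodule.span K (Set.range ![x, y]) with hW
      have hxW : x ∈ W := Submodule.subset_span ⟨0, rfl⟩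
      have hyW : y ∈ W := Submodule.subset_span ⟨1, rfl⟩
      have hWrank : Module.finrank K W = 2 := by
        rw [hW, finrank_span_eq_card hli, Fintype.card_fin]
      -- restriction to W nondegenerate
      have hWnd : (B.restrict W).Nondegenerate := by
        refine (LinearMap.IsRefl.nondegenerate_iff_separatingLeft (B := B.restrict W) (fun a b h => hrefl _ _ h)).mpr ?_
        rintro ⟨w, hw⟩ hw0
        have h1 := hw0 ⟨x, hxW⟩
        have h2 := hw0 ⟨y, hyW⟩
        simp only [LinearMap.BilinForm.restrict_apply, Submodule.mk_eq_zero] at h1 h2 ⊢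
        obtain ⟨c, hc⟩ := Submodule.mem_span_range_iff_exists_fun K |>.mp hw
        rw [← hc] at h1 h2 ⊢
        rw [Fin.sum_univ_two] at h1 h2 ⊢
        simp only [Matrix.cons_val_zero, Matrix.cons_val_one, Matrix.head_cons] at h1 h2 ⊢
        simp only [map_add, map_smul, LinearMap.add_apply, LinearMap.smul_apply,
          LinearMap.domRestrict_apply, smul_eq_mul, halt x, halt y, mul_zero,
          zero_add, add_zero] at h1 h2
        have hyx : B y x ≠ 0 := fun h => hxy (by
          have h3 := LinearMap.IsAlt.neg halt x y; rw [h] at h3; exact neg_eq_zero.mp h3)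
        have hc1 : c 1 = 0 := by
          rcases mul_eq_zero.mp h1 with h | h
          · exact h
          · exact absurd h hyx
        have hc0 : c 0 = 0 := by
          rcases mul_eq_zero.mp h2 with h | h
          · exact h
          · exact absurd h hxy
        rw [hc0, hc1, zero_smul, zero_smul, add_zero]
      have hcompl : IsCompl W (B.orthogonal W) :=
        B.isCompl_orthogonal_of_restrict_nondegenerate hrefl hWnd
      have horthnd : (B.restrict (B.orthogonal W)).Nondegenerate := by
        apply B.nondegenerate_restrict_of_disjoint_orthogonal hrefl
        rw [B.orthogonal_orthogonal hnd hrefl]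
        exact hcompl.disjoint.symm
      have hsum : Module.finrank K W + Module.finrank K (B.orthogonal W) = k := by
        rw [Submodule.finrank_add_eq_of_isCompl hcompl, hk]
      have horthalt : (B.restrict (B.orthogonal W)).IsAlt := fun m => halt m
      have hlt : Module.finrank K (B.orthogonal W) < k := by omega
      have := IH _ hlt (B.restrict (B.orthogonal W)) rfl horthalt horthnd
      obtain ⟨m, hm⟩ := this
      exact ⟨m + 1, by omega⟩

end Aux

/-- In the tripartite setting with `S = S_Â ⊕ S_B̂ ⊕ S_Ĉ`, the
form `η(f,g) = ω(f_A, g_A)` on `R = S_Ĉ` is alternating and nondegenerate;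
consequently `dim S_Ĉ` is even. Parties: `A = 0`, `B = 1`, `C = 2`. -/
theorem colocal_form_nondegenerate (n : ℕ) (party : Fin n → Fin 3)
    (S : Submodule (ZMod 2) (PV (Fin n)))
    (hsd : S = LinearMap.BilinForm.orthogonal (sympForm (Fin n)) S)
    (hfull : ∀ α, S ⊓ localSub party α = ⊥)
    (hgen : S = ⨆ α : Fin 3, colocalSub S party α) :
    (∀ f ∈ colocalSub S party 2, sympOn (partySet party 0) f f = 0) ∧
    (∀ f ∈ colocalSub S party 2,
      (∀ g ∈ colocalSub S party 2, sympOn (partySet party 0) f g = 0) → f = 0) ∧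
    Even (Module.finrank (ZMod 2) (colocalSub S party 2)) := by
  -- the self-duality hypothesis, unfolded
  have horth : ∀ f ∈ S, ∀ g ∈ S, sympForm (Fin n) f g = 0 := by
    intro f hf g hg
    rw [hsd] at hg
    exact hg f hf
  -- the main nondegeneracy claim
  have main : ∀ f ∈ colocalSub S party 2,
      (∀ g ∈ colocalSub S party 2, sympOn (partySet party 0) f g = 0) → f = 0 := by
    intro f hf hf0
    obtain ⟨hfS, hfC⟩ := mem_colocalSub.mp hf
    have hfC' : ∀ j ∈ partySet party 2, f j = 0 := fun j hj => hfC j (mem_partySet.mp hj)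
    -- key: f pairs trivially (on A-coordinates) with everything in S
    have key : ∀ g ∈ S, sympOn (partySet party 0) f g = 0 := by
      intro g hg
      rw [hgen] at hg
      refine Submodule.iSup_induction
        (motive := fun g => sympOn (partySet party 0) f g = 0) _ hg ?_ ?_ ?_
      · intro α g hgα
        obtain ⟨hgS, hgα⟩ := mem_colocalSub.mp hgα
        fin_cases α
        · replace hgα : ∀ j, party j = 0 → g j = 0 := hgα
          exact sympOn_eq_zero_right (fun j hj => hgα j (mem_partySet.mp hj)) f
        · replace hgα : ∀ j, party j = 1 → g j = 0 := hgα
          have h0 := horth g hgS f hfS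
          rw [sympForm_eq_sum_parties party, Fin.sum_univ_three,
            sympOn_eq_zero_left (fun j hj => hgα j (mem_partySet.mp hj)) f,
            sympOn_eq_zero_right hfC' g, add_zero, add_zero] at h0
          rw [sympOn_comm]
          exact h0
        · replace hgα : ∀ j, party j = 2 → g j = 0 := hgα
          exact hf0 g (mem_colocalSub.mpr ⟨hgS, hgα⟩)
      · exact sympOn_eq_zero_right (A := partySet party 0) (g := 0) (fun j _ => rfl) f
      · intro x y hx hy
        have : sympOn (partySet party 0) f (x + y)
            = sympOn (partySet party 0) f x + sympOn (partySet party 0) f y := by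
          rw [← sympOnForm_apply, ← sympOnForm_apply, ← sympOnForm_apply, map_add]
        rw [this, hx, hy, add_zero]
    -- the A-part of f lies in S and in the local subspace of A, hence is 0
    set h : PV (Fin n) := fun j => if party j = 0 then f j else 0 with hh
    have hloc : h ∈ localSub party 0 := fun j hj => if_neg hj
    have hSorth : h ∈ LinearMap.BilinForm.orthogonal (sympForm (Fin n)) S := by
      intro s hs
      show sympForm (Fin n) s h = 0
      have : sympForm (Fin n) h s = sympOn (partySet party 0) f s := by
        rw [sympForm_eq_sum_parties party, Fin.sum_univ_three,
          sympOn_eq_zero_left (g := s) (A := partySet party 1)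
            (fun j hj => if_neg (by rw [mem_partySet.mp hj]; decide)),
          sympOn_eq_zero_left (g := s) (A := partySet party 2)
            (fun j hj => if_neg (by rw [mem_partySet.mp hj]; decide)),
          add_zero, add_zero]
        exact Finset.sum_congr rfl fun j hj => by
          rw [hh]; simp only [if_pos (mem_partySet.mp hj)]
      have hsym : sympForm (Fin n) s h = sympForm (Fin n) h s := by
        show (∑ j, ((s j).1 * (h j).2 + (s j).2 * (h j).1))
          = ∑ j, ((h j).1 * (s j).2 + (h j).2 * (s j).1)
        exact Finset.sum_congr rfl fun j _ => by ring
      rw [hsym, this]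
      exact key s hs
    have hzero : h = 0 := by
      have : h ∈ S ⊓ localSub party 0 := ⟨hsd ▸ hSorth, hloc⟩
      rw [hfull 0] at this
      exact this
    have hfA : ∀ j, party j = 0 → f j = 0 := by
      intro j hj
      simpa [hh, hj] using congrFun hzero j
    -- now f is supported on B only, hence f = 0
    have hfB : f ∈ localSub party 1 := by
      intro j hj
      have h3 : party j = 0 ∨ party j = 1 ∨ party j = 2 := by
        have := (party j).isLt; omega
      rcases h3 with h | h | h
      · exact hfA j h
      · exact absurd h hj
      · exact hfC j h
    have : f ∈ S ⊓ localSub party 1 := ⟨hfS, hfB⟩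
    rw [hfull 1] at this
    exact this
  refine ⟨fun f _ => sympOn_self _ f, main, ?_⟩
  -- evenness from the general lemma
  have halt : ((sympOnForm (partySet party 0)).restrict
      (colocalSub S party 2)).IsAlt := fun f => sympOn_self (partySet party 0) f.1
  have hnd : ((sympOnForm (partySet party 0)).restrict
      (colocalSub S party 2)).Nondegenerate := by
    refine (LinearMap.IsRefl.nondegenerate_iff_separatingLeft halt.isRefl).mpr ?_
    rintro ⟨f, hf⟩ h0
    rw [Submodule.mk_eq_zero]
    exact main f hf fun g hg => h0 ⟨g, hg⟩
  exact even_finrank_of_alt_nondeg _ _ rfl halt hnd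
end

section
/- Consider the 6-qubit graph state |G⟩ associated with the graph G on vertices {1,...,6} with edges {(1,2),(2,3),(1,3),(4,5),(5,6),(4,6),(1,4),(2,5),(3,6)} (two triangles joined by a perfect matching), with stabilizer generators σ(f_u) = σ^x_u ⊗ Π_{(u,v)∈E} σ^z_v. Then the reduced density matrix of |G⟩ on any 3 of the 6 qubits is maximally mixed: Tr_{uvw}(|G⟩⟨G|) = I/8 for any distinct u, v, w. -/
/-- The single-qubit Pauli matrix `σ_{ab}` labeled by `(a, b) ∈ F_2 × F_2`:
`σ_{00} = I`, `σ_{10} = σ^x`, `σ_{01} = σ^z`, `σ_{11} = σ^y`. -/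
noncomputable def pauli (v : ZMod 2 × ZMod 2) : Matrix (Fin 2) (Fin 2) ℂ :=
  if v = (0, 0) then !![1, 0; 0, 1]
  else if v = (1, 0) then !![0, 1; 1, 0]
  else if v = (0, 1) then !![1, 0; 0, -1]
  else !![0, -Complex.I; Complex.I, 0]

/-- The multi-qubit Pauli operator `σ(f)`, the tensor product of the `pauli (f j)`
over all qubits `j` (written entrywise). -/
noncomputable def pauliOp {ι : Type*} [Fintype ι] (f : PV ι) :
    Matrix (ι → Fin 2) (ι → Fin 2) ℂ :=
  fun x y => ∏ j, pauli (f j) (x j) (y j)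

/-- The density matrix `|ψ⟩⟨ψ|` of a pure state `ψ`. -/
noncomputable def pureDensity {ι : Type*} (ψ : (ι → Fin 2) → ℂ) :
    Matrix (ι → Fin 2) (ι → Fin 2) ℂ :=
  fun x y => ψ x * (starRingEnd ℂ) (ψ y)

/-- Partial trace over the qubits in `A` of an operator on `ι`-indexed qubits. -/
noncomputable def ptraceOut {ι : Type*} [Fintype ι] [DecidableEq ι] (A : Finset ι)
    (ρ : Matrix (ι → Fin 2) (ι → Fin 2) ℂ) :
    Matrix ({j : ι // j ∉ A} → Fin 2) ({j : ι // j ∉ A} → Fin 2) ℂ :=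
  fun x y => ∑ z : {j : ι // j ∈ A} → Fin 2,
    ρ (fun j => if h : j ∈ A then z ⟨j, h⟩ else x ⟨j, h⟩)
      (fun j => if h : j ∈ A then z ⟨j, h⟩ else y ⟨j, h⟩)

/-- The von Neumann entropy `S(ρ) = −Tr ρ log ρ` of a Hermitian matrix, computed
through its eigenvalues (and junk value `0` on non-Hermitian matrices). -/
noncomputable def vNEntropy {κ : Type*} [Fintype κ] [DecidableEq κ]
    (ρ : Matrix κ κ ℂ) : ℝ :=
  if h : ρ.IsHermitian then ∑ i, Real.negMulLog (h.eigenvalues i) else 0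

open scoped ComplexOrder

/-- Edges of the triangular prism graph on vertices `0,...,5` (paper vertices
`1,...,6`): triangles `012`, `345` and matching `03, 14, 25`. -/
def prismEdges : List (Fin 6 × Fin 6) :=
  [(0,1), (1,2), (0,2), (3,4), (4,5), (3,5), (0,3), (1,4), (2,5)]

/-- Adjacency of the prism graph. -/
def prismAdj (u v : Fin 6) : Prop := (u, v) ∈ prismEdges ∨ (v, u) ∈ prismEdges

instance (u v : Fin 6) : Decidable (prismAdj u v) := by
  unfold prismAdj; infer_instance

/-- Graph-state stabilizer generator `σ^x_u ⊗ Π_{(u,v) ∈ E} σ^z_v` in symplectic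
notation. -/
def graphGen (u : Fin 6) : PV (Fin 6) :=
  fun v => ((if v = u then 1 else 0 : ZMod 2), (if prismAdj u v then 1 else 0 : ZMod 2))


namespace PrismAux
open Finset

def flp (t : Fin 2) : Fin 2 := if t = 0 then 1 else 0
def bz (t : Fin 2) : ZMod 2 := if t = 0 then 0 else 1
noncomputable def chi (a : ZMod 2) : ℂ := if a = 0 then 1 else -1
def Q (w : Fin 6 → ZMod 2) : ZMod 2 := (prismEdges.map fun e => w e.1 * w e.2).sum
def N (u : Fin 6) (w : Fin 6 → ZMod 2) : ZMod 2 := ∑ v, if prismAdj u v then w v else 0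
noncomputable def sgn (u : Fin 6) (x : Fin 6 → Fin 2) : ℂ :=
  ∏ j, if prismAdj u j ∧ x j = 1 then (-1 : ℂ) else 1

lemma zc (a : ZMod 2) : a = 0 ∨ a = 1 := by revert a; decide
lemma fc (t : Fin 2) : t = 0 ∨ t = 1 := by revert t; decide
lemma zmod_add_self (a : ZMod 2) : a + a = 0 := by revert a; decide
lemma chi_zero : chi 0 = 1 := if_pos rfl
lemma chi_one : chi 1 = -1 := by simp [chi]
lemma chi_add (a b : ZMod 2) : chi (a + b) = chi a * chi b := by
  rcases zc a with h | h <;> rcases zc b with h' | h' <;> subst h <;> subst h' <;>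
    simp [chi, show (1 : ZMod 2) + 1 = 0 by decide]
lemma chi_conj (a : ZMod 2) : (starRingEnd ℂ) (chi a) = chi a := by
  rcases zc a with h | h <;> subst h <;> simp [chi]
lemma normSq_chi_mul (a : ZMod 2) (c : ℂ) :
    Complex.normSq (chi a * c) = Complex.normSq c := by
  rcases zc a with h | h <;> subst h <;> simp [chi]
lemma chi_sum {α : Type*} (s : Finset α) (a : α → ZMod 2) :
    chi (∑ j ∈ s, a j) = ∏ j ∈ s, chi (a j) := by
  induction s using Finset.cons_induction with
  | empty => simp [chi_zero]
  | cons i s hi ih => rw [Finset.sum_cons, Finset.prod_cons, chi_add, ih]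

lemma bz_flp : ∀ t : Fin 2, bz (flp t) = bz t + 1 := by decide
lemma flp_flp : ∀ t : Fin 2, flp (flp t) = t := by decide
lemma flp_ne : ∀ t : Fin 2, flp t ≠ t := by decide
lemma ne_flp_eq : ∀ a b : Fin 2, a ≠ flp b → a = b := by decide
lemma bz_add_eq_zero : ∀ a b : Fin 2, bz a + bz b = 0 → a = b := by decide

lemma adj_irrefl : ∀ u : Fin 6, ¬ prismAdj u u := by decide

lemma Q_update : ∀ (w : Fin 6 → ZMod 2) (u : Fin 6),
    Q (Function.update w u (w u + 1)) = Q w + N u w := by decide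

set_option maxRecDepth 10000 in
lemma L2 : ∀ T : Finset (Fin 6), T.card = 3 → ∀ w : Fin 6 → ZMod 2,
    (∀ j ∈ T, w j = 0) → w ≠ 0 → ∃ u ∈ T, N u w = 1 := by decide

lemma N_add (u : Fin 6) (w₁ w₂ : Fin 6 → ZMod 2) :
    N u (fun j => w₁ j + w₂ j) = N u w₁ + N u w₂ := by
  unfold N
  rw [← Finset.sum_add_distrib]
  exact Finset.sum_congr rfl fun v _ => by split <;> simp

lemma pauliI_apply (a b : Fin 2) : pauli (0, 0) a b = if a = b then 1 else 0 := by
  fin_cases a <;> fin_cases b <;> simp [pauli]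
lemma pauliX_apply (a b : Fin 2) : pauli (1, 0) a b = if a = b then 0 else 1 := by
  fin_cases a <;> fin_cases b <;> simp [pauli, Prod.ext_iff]
lemma pauliZ_apply (a b : Fin 2) :
    pauli (0, 1) a b = if a = b then (if a = 1 then -1 else 1) else 0 := by
  fin_cases a <;> fin_cases b <;> simp [pauli, Prod.ext_iff]

lemma graphGen_self (u : Fin 6) : graphGen u u = (1, 0) := by
  simp [graphGen, adj_irrefl u]
lemma graphGen_ne (u j : Fin 6) (h : j ≠ u) :
    graphGen u j = (0, if prismAdj u j then 1 else 0) := by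
  simp [graphGen, h]

lemma bc_update_flp (f : Fin 6 → Fin 2) (u : Fin 6) :
    (fun j => bz (Function.update f u (flp (f u)) j)) =
      Function.update (fun j => bz (f j)) u (bz (f u) + 1) := by
  funext j
  by_cases hj : j = u
  · subst hj; rw [Function.update_self, Function.update_self, bz_flp]
  · rw [Function.update_of_ne hj, Function.update_of_ne hj]

lemma pauliOp_graphGen (u : Fin 6) (x y : Fin 6 → Fin 2) :
    pauliOp (graphGen u) x y =
      if y = Function.update x u (flp (x u)) then sgn u x else 0 := by
  by_cases hy : y = Function.update x u (flp (x u))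
  · subst hy
    rw [if_pos rfl]
    unfold pauliOp sgn
    rw [Finset.prod_eq_prod_diff_singleton_mul (Finset.mem_univ u),
        Finset.prod_eq_prod_diff_singleton_mul (Finset.mem_univ u)
          (fun j => if prismAdj u j ∧ x j = 1 then (-1 : ℂ) else 1)]
    congr 1
    · apply Finset.prod_congr rfl
      intro j hj
      have hju : j ≠ u := by
        intro h; subst h; simp at hj
      rw [Function.update_of_ne hju, graphGen_ne u j hju]
      by_cases hadj : prismAdj u j
      · rw [if_pos hadj, pauliZ_apply, if_pos rfl]
        simp [hadj]
      · rw [if_neg hadj, pauliI_apply, if_pos rfl]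
        simp [hadj]
    · rw [Function.update_self, graphGen_self, pauliX_apply,
        if_neg (fun h => flp_ne (x u) h.symm)]
      simp [adj_irrefl u]
  · rw [if_neg hy]
    have hex : ∃ j, y j ≠ Function.update x u (flp (x u)) j := by
      by_contra h; push_neg at h; exact hy (funext h)
    obtain ⟨j, hj⟩ := hex
    unfold pauliOp
    apply Finset.prod_eq_zero (Finset.mem_univ j)
    by_cases hju : j = u
    · subst hju
      rw [Function.update_self] at hj
      have hxy : y j = x j := ne_flp_eq _ _ hj
      rw [graphGen_self, pauliX_apply, if_pos hxy.symm]
    · rw [Function.update_of_ne hju] at hj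
      rw [graphGen_ne u j hju]
      by_cases hadj : prismAdj u j
      · rw [if_pos hadj, pauliZ_apply, if_neg (fun h => hj h.symm)]
      · rw [if_neg hadj, pauliI_apply, if_neg (fun h => hj h.symm)]

lemma sgn_mul_self (u : Fin 6) (x : Fin 6 → Fin 2) : sgn u x * sgn u x = 1 := by
  unfold sgn
  rw [← Finset.prod_mul_distrib]
  apply Finset.prod_eq_one
  intro j _
  split <;> norm_num

lemma sgn_eq_chi (u : Fin 6) (x : Fin 6 → Fin 2) :
    sgn u x = chi (N u fun j => bz (x j)) := by
  unfold sgn N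
  rw [chi_sum]
  apply Finset.prod_congr rfl
  intro j _
  by_cases hadj : prismAdj u j
  · simp only [hadj, true_and, if_true]
    rcases fc (x j) with h | h <;> rw [h] <;> simp [chi, bz]
  · simp [hadj, chi_zero]

section Psi

variable {ψ : (Fin 6 → Fin 2) → ℂ}

lemma stab_eval (hstab : ∀ u : Fin 6, (pauliOp (graphGen u)).mulVec ψ = ψ)
    (u : Fin 6) (x : Fin 6 → Fin 2) :
    ψ (Function.update x u (flp (x u))) = sgn u x * ψ x := by
  have h := congrFun (hstab u) x
  rw [Matrix.mulVec, dotProduct] at h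
  have h2 : ∑ y, (if y = Function.update x u (flp (x u)) then sgn u x else 0) * ψ y
      = ψ x := by
    rw [← h]
    exact Finset.sum_congr rfl fun y _ => by rw [pauliOp_graphGen]
  simp only [ite_mul, zero_mul] at h2
  rw [Finset.sum_ite_eq' Finset.univ (Function.update x u (flp (x u)))
    (fun y => sgn u x * ψ y), if_pos (Finset.mem_univ _)] at h2
  calc ψ (Function.update x u (flp (x u)))
      = (sgn u x * sgn u x) * ψ (Function.update x u (flp (x u))) := by
        rw [sgn_mul_self, one_mul]
    _ = sgn u x * (sgn u x * ψ (Function.update x u (flp (x u)))) := by ring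
    _ = sgn u x * ψ x := by rw [h2]

lemma psi_eq (hstab : ∀ u : Fin 6, (pauliOp (graphGen u)).mulVec ψ = ψ)
    (x : Fin 6 → Fin 2) :
    ψ x = chi (Q fun j => bz (x j)) * ψ (fun _ => 0) := by
  suffices H : ∀ n (x : Fin 6 → Fin 2),
      (Finset.univ.filter fun j => x j = 1).card = n →
      ψ x = chi (Q fun j => bz (x j)) * ψ (fun _ => 0) from H _ x rfl
  intro n
  induction n with
  | zero =>
    intro x hx
    have hx0 : x = fun _ => 0 := by
      funext j
      rcases fc (x j) with h | h
      · exact h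
      · exfalso
        have hj : j ∈ Finset.univ.filter fun j => x j = 1 := by simp [h]
        rw [Finset.card_eq_zero] at hx
        simp [hx] at hj
    subst hx0
    rw [show Q (fun _ => bz 0) = 0 by decide, chi_zero, one_mul]
  | succ n ih =>
    intro x hx
    have hne : (Finset.univ.filter fun j => x j = 1).Nonempty := by
      rw [← Finset.card_pos, hx]; omega
    obtain ⟨u, hu⟩ := hne
    rw [Finset.mem_filter] at hu
    set x' := Function.update x u 0 with hx'def
    have hx'u : x' u = 0 := Function.update_self u 0 x
    have hcard : (Finset.univ.filter fun j => x' j = 1).card = n := by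
      have hfe : (Finset.univ.filter fun j => x' j = 1)
          = (Finset.univ.filter fun j => x j = 1).erase u := by
        ext j
        by_cases hj : j = u
        · subst hj
          simp [hx'u]
        · simp [Finset.mem_erase, hj, hx'def, Function.update_of_ne hj]
      rw [hfe, Finset.card_erase_of_mem (by simp [hu.2]), hx]
      omega
    have hxu : x = Function.update x' u (flp (x' u)) := by
      funext j
      by_cases hj : j = u
      · subst hj
        rw [Function.update_self, hx'u, hu.2]
        rfl
      · rw [Function.update_of_ne hj, hx'def, Function.update_of_ne hj]
    rw [hxu, stab_eval hstab, ih x' hcard, bc_update_flp, Q_update, chi_add,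
      sgn_eq_chi]
    ring

lemma psi0_normSq (hnorm : ∑ x, Complex.normSq (ψ x) = 1)
    (hstab : ∀ u : Fin 6, (pauliOp (graphGen u)).mulVec ψ = ψ) :
    ψ (fun _ => 0) * (starRingEnd ℂ) (ψ (fun _ => 0)) = 1 / 64 := by
  have h : ∀ x : Fin 6 → Fin 2,
      Complex.normSq (ψ x) = Complex.normSq (ψ fun _ => 0) := by
    intro x
    rw [psi_eq hstab x, normSq_chi_mul]
  rw [Finset.sum_congr rfl (fun x _ => h x), Finset.sum_const, Finset.card_univ,
    show Fintype.card (Fin 6 → Fin 2) = 64 by simp, nsmul_eq_mul] at hnorm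
  rw [Complex.mul_conj]
  have : Complex.normSq (ψ fun _ => 0) = 1 / 64 := by
    push_cast at hnorm; linarith
  rw [this]
  norm_num

end Psi

end PrismAux

/-- The reduced density matrix of the prism graph state on any
3 of its 6 qubits is maximally mixed: tracing out any three qubits gives `I/8`. -/
theorem prism_graph_state_three_qubit_marginals_maximally_mixed
    (ψ : (Fin 6 → Fin 2) → ℂ)
    (hnorm : ∑ x, Complex.normSq (ψ x) = 1)
    (hstab : ∀ u : Fin 6, (pauliOp (graphGen u)).mulVec ψ = ψ) :
    ∀ T : Finset (Fin 6), T.card = 3 →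
      ptraceOut T (pureDensity ψ) =
        (8 : ℂ)⁻¹ • (1 : Matrix ({j : Fin 6 // j ∉ T} → Fin 2)
          ({j : Fin 6 // j ∉ T} → Fin 2) ℂ) := by
  classical
  intro T hT
  have hstab' := hstab
  ext x y
  -- merged configuration
  set m : ({j : Fin 6 // j ∈ T} → Fin 2) → ({j : Fin 6 // j ∉ T} → Fin 2) →
      (Fin 6 → Fin 2) :=
    fun z w => (fun j => if h : j ∈ T then z ⟨j, h⟩ else w ⟨j, h⟩) with hm
  have hterm : ∀ z : {j : Fin 6 // j ∈ T} → Fin 2,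
      pureDensity ψ (m z x) (m z y)
        = PrismAux.chi (PrismAux.Q (fun j => PrismAux.bz (m z x j))
            + PrismAux.Q (fun j => PrismAux.bz (m z y j))) * (1 / 64) := by
    intro z
    show ψ (m z x) * (starRingEnd ℂ) (ψ (m z y)) = _
    rw [PrismAux.psi_eq hstab (m z x), PrismAux.psi_eq hstab (m z y), map_mul,
      PrismAux.chi_conj, PrismAux.chi_add]
    have hrw : PrismAux.chi (PrismAux.Q fun j => PrismAux.bz (m z x j)) * ψ (fun _ => 0) *
        (PrismAux.chi (PrismAux.Q fun j => PrismAux.bz (m z y j)) *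
          (starRingEnd ℂ) (ψ (fun _ => 0)))
        = PrismAux.chi (PrismAux.Q fun j => PrismAux.bz (m z x j)) *
            PrismAux.chi (PrismAux.Q fun j => PrismAux.bz (m z y j)) *
            (ψ (fun _ => 0) * (starRingEnd ℂ) (ψ (fun _ => 0))) := by ring
    rw [hrw, PrismAux.psi0_normSq hnorm hstab]
  have hLHS : ptraceOut T (pureDensity ψ) x y
      = ∑ z : {j : Fin 6 // j ∈ T} → Fin 2,
          PrismAux.chi (PrismAux.Q (fun j => PrismAux.bz (m z x j))
            + PrismAux.Q (fun j => PrismAux.bz (m z y j))) * (1 / 64) := by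
    unfold ptraceOut
    exact Finset.sum_congr rfl fun z _ => hterm z
  rw [hLHS]
  have hcT : Fintype.card {j : Fin 6 // j ∈ T} = 3 := (Fintype.card_coe T).trans hT
  by_cases hxy : x = y
  · subst hxy
    have h1 : ∀ z : {j : Fin 6 // j ∈ T} → Fin 2,
        PrismAux.chi (PrismAux.Q (fun j => PrismAux.bz (m z x j))
          + PrismAux.Q (fun j => PrismAux.bz (m z x j))) * (1 / 64) = (1 / 64 : ℂ) := by
      intro z
      rw [PrismAux.zmod_add_self, PrismAux.chi_zero, one_mul]
    rw [Finset.sum_congr rfl fun z _ => h1 z, Finset.sum_const, Finset.card_univ,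
      Fintype.card_fun, hcT]
    simp [Matrix.smul_apply, Matrix.one_apply]
    norm_num
  · rw [Matrix.smul_apply, Matrix.one_apply_ne hxy, smul_zero]
    -- the difference vector
    set W : Fin 6 → ZMod 2 := fun j =>
      if h : j ∈ T then 0
      else PrismAux.bz (x ⟨j, h⟩) + PrismAux.bz (y ⟨j, h⟩) with hWdef
    have hW0 : ∀ j ∈ T, W j = 0 := fun j hj => by simp [hWdef, hj]
    have hWne : W ≠ 0 := by
      intro hW
      apply hxy
      funext j
      have hj := congrFun hW j.1
      rw [hWdef] at hj
      simp only [dif_neg j.2, Pi.zero_apply] at hj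
      exact PrismAux.bz_add_eq_zero _ _ hj
    obtain ⟨u₀, hu₀T, hu₀⟩ := PrismAux.L2 T hT W hW0 hWne
    set u' : {j : Fin 6 // j ∈ T} := ⟨u₀, hu₀T⟩ with hu'
    -- flipping z at u₀ commutes with merging
    have hmflip : ∀ (w : {j : Fin 6 // j ∉ T} → Fin 2) z,
        m (Function.update z u' (PrismAux.flp (z u'))) w
          = Function.update (m z w) u₀ (PrismAux.flp (m z w u₀)) := by
      intro w z
      funext j
      by_cases hj : j = u₀
      · subst hj
        rw [Function.update_self]
        show (if h : j ∈ T then Function.update z u' (PrismAux.flp (z u')) ⟨j, h⟩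
          else w ⟨j, h⟩) = _
        rw [dif_pos hu₀T]
        have huu : (⟨j, hu₀T⟩ : {j : Fin 6 // j ∈ T}) = u' := rfl
        rw [huu, Function.update_self]
        congr 1
        show _ = (if h : j ∈ T then z ⟨j, h⟩ else w ⟨j, h⟩)
        rw [dif_pos hu₀T]
      · rw [Function.update_of_ne hj]
        show (if h : j ∈ T then Function.update z u' (PrismAux.flp (z u')) ⟨j, h⟩
            else w ⟨j, h⟩)
          = (if h : j ∈ T then z ⟨j, h⟩ else w ⟨j, h⟩)
        by_cases hjT : j ∈ T
        · rw [dif_pos hjT, dif_pos hjT,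
            Function.update_of_ne (fun h => hj (congrArg Subtype.val h))]
        · rw [dif_neg hjT, dif_neg hjT]
    -- the exponent function
    set E : ({j : Fin 6 // j ∈ T} → Fin 2) → ZMod 2 := fun z =>
      PrismAux.Q (fun j => PrismAux.bz (m z x j))
        + PrismAux.Q (fun j => PrismAux.bz (m z y j)) with hE
    have hEflip : ∀ z, E (Function.update z u' (PrismAux.flp (z u'))) = E z + 1 := by
      intro z
      have hQx : PrismAux.Q (fun j => PrismAux.bz
            (m (Function.update z u' (PrismAux.flp (z u'))) x j))
          = PrismAux.Q (fun j => PrismAux.bz (m z x j))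
            + PrismAux.N u₀ (fun j => PrismAux.bz (m z x j)) := by
        rw [hmflip x z, PrismAux.bc_update_flp, PrismAux.Q_update]
      have hQy : PrismAux.Q (fun j => PrismAux.bz
            (m (Function.update z u' (PrismAux.flp (z u'))) y j))
          = PrismAux.Q (fun j => PrismAux.bz (m z y j))
            + PrismAux.N u₀ (fun j => PrismAux.bz (m z y j)) := by
        rw [hmflip y z, PrismAux.bc_update_flp, PrismAux.Q_update]
      have hsum : (fun j => PrismAux.bz (m z x j) + PrismAux.bz (m z y j)) = W := by
        funext j
        show PrismAux.bz (if h : j ∈ T then z ⟨j, h⟩ else x ⟨j, h⟩)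
            + PrismAux.bz (if h : j ∈ T then z ⟨j, h⟩ else y ⟨j, h⟩) = W j
        simp only [hWdef]
        by_cases hjT : j ∈ T
        · rw [dif_pos hjT, dif_pos hjT, dif_pos hjT, PrismAux.zmod_add_self]
        · rw [dif_neg hjT, dif_neg hjT, dif_neg hjT]
      have hN : PrismAux.N u₀ (fun j => PrismAux.bz (m z x j))
          + PrismAux.N u₀ (fun j => PrismAux.bz (m z y j)) = 1 := by
        rw [← PrismAux.N_add, hsum, hu₀]
      rw [hE]
      simp only [hQx, hQy]
      rw [show ∀ a b c d : ZMod 2, a + b + (c + d) = a + c + (b + d) by intros; ring,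
        hN]
    rw [← Finset.sum_mul]
    have hzero : ∑ z : {j : Fin 6 // j ∈ T} → Fin 2, PrismAux.chi (E z) = 0 := by
      apply Finset.sum_ninvolution
        (g := fun z => Function.update z u' (PrismAux.flp (z u')))
      · intro z
        rw [hEflip z, PrismAux.chi_add (E z) 1, PrismAux.chi_one]
        show PrismAux.chi (E z) + PrismAux.chi (E z) * -1 = 0
        ring
      · intro z _ h
        have := congrFun h u'
        rw [Function.update_self] at this
        exact PrismAux.flp_ne _ this
      · intro z
        exact Finset.mem_univ _
      · intro z
        funext j
        by_cases hj : j = u'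
        · subst hj
          rw [Function.update_self, Function.update_self, PrismAux.flp_flp]
        · rw [Function.update_of_ne hj, Function.update_of_ne hj]
    rw [hzero, zero_mul]
end

section
/- Let S ⊆ G^6 = F_2^{12} be the self-dual subspace generated by the six graph-state vectors of the triangular prism graph (vertices 1-6, triangle edges (1,2),(2,3),(1,3),(4,5),(5,6),(4,6), matching edges (1,4),(2,5),(3,6)), i.e., f_u corresponding to σ^x_u Π_{(u,v)∈E} σ^z_v. Partition the coordinates among parties A = {1,4}, B = {3,6}, C = {2}, D = {5}. Then: the only nonzero elements of S supported entirely on A ∪ B are the three vectors corresponding to σ^y_1 σ^z_4 σ^y_3 σ^z_6, σ^z_1 σ^y_4 σ^z_3 σ^y_6, and σ^x_1 σ^x_4 σ^x_3 σ^x_6, and any two of these commute locally on A and locally on B (i.e., ω(f_A, g_A) = 0 and ω(f_B, g_B) = 0 for any two such elements f, g). -/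
/-- The stabilizer group of the prism graph state. -/
def prismStab : Submodule (ZMod 2) (PV (Fin 6)) :=
  Submodule.span (ZMod 2) (Set.range graphGen)

/-- `σ^y_1 σ^z_4 σ^y_3 σ^z_6` (qubits `1..6` are indices `0..5`). -/
def w₁ : PV (Fin 6) := ![(1,1), (0,0), (1,1), (0,1), (0,0), (0,1)]
/-- `σ^z_1 σ^y_4 σ^z_3 σ^y_6`. -/
def w₂ : PV (Fin 6) := ![(0,1), (0,0), (0,1), (1,1), (0,0), (1,1)]
/-- `σ^x_1 σ^x_4 σ^x_3 σ^x_6`. -/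
def w₃ : PV (Fin 6) := ![(1,0), (0,0), (1,0), (1,0), (0,0), (1,0)]

lemma hx2 : ∀ x : ZMod 2, x = 0 ∨ x = 1 := by decide

lemma w₁_mem : w₁ ∈ prismStab := by
  have h : graphGen 0 + graphGen 2 = w₁ := by decide
  exact h ▸ add_mem (Submodule.subset_span ⟨0, rfl⟩) (Submodule.subset_span ⟨2, rfl⟩)

lemma w₂_mem : w₂ ∈ prismStab := by
  have h : graphGen 3 + graphGen 5 = w₂ := by decide
  exact h ▸ add_mem (Submodule.subset_span ⟨3, rfl⟩) (Submodule.subset_span ⟨5, rfl⟩)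

lemma w₃_mem : w₃ ∈ prismStab := by
  have h : w₁ + w₂ = w₃ := by decide
  exact h ▸ add_mem w₁_mem w₂_mem

/-- For the prism graph state shared by parties `A = {1,4}`,
`B = {3,6}`, `C = {2}`, `D = {5}` (indices `A = {0,3}`, `B = {2,5}`, `C = {1}`,
`D = {4}`), the only nonzero stabilizer elements supported on `A ∪ B` are
`w₁, w₂, w₃`, and any two of them commute locally on `A` and on `B`. -/
theorem prism_stabilizer_on_AB :
    ({g | g ∈ prismStab ∧ g ≠ 0 ∧ g 1 = 0 ∧ g 4 = 0} : Set (PV (Fin 6))) =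
      {w₁, w₂, w₃} ∧
    (∀ f ∈ ({w₁, w₂, w₃} : Set (PV (Fin 6))),
      ∀ g ∈ ({w₁, w₂, w₃} : Set (PV (Fin 6))),
        sympOn ({0, 3} : Finset (Fin 6)) f g = 0 ∧
        sympOn ({2, 5} : Finset (Fin 6)) f g = 0) := by
  constructor
  · ext g
    simp only [Set.mem_setOf_eq, Set.mem_insert_iff, Set.mem_singleton_iff]
    constructor
    · rintro ⟨hg, hne, hz1, hz4⟩
      rw [prismStab, Submodule.mem_span_range_iff_exists_fun] at hg
      obtain ⟨c, rfl⟩ := hg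
      rw [Fin.sum_univ_six] at hz1 hz4 hne ⊢
      rcases hx2 (c 0) with e0 | e0 <;> rcases hx2 (c 1) with e1 | e1 <;>
        rcases hx2 (c 2) with e2 | e2 <;> rcases hx2 (c 3) with e3 | e3 <;>
        rcases hx2 (c 4) with e4 | e4 <;> rcases hx2 (c 5) with e5 | e5 <;>
        rw [e0, e1, e2, e3, e4, e5] at hz1 hz4 hne ⊢ <;>
        revert hne hz1 hz4 <;> decide
    · rintro (rfl | rfl | rfl)
      · exact ⟨w₁_mem, by decide, by decide, by decide⟩
      · exact ⟨w₂_mem, by decide, by decide, by decide⟩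
      · exact ⟨w₃_mem, by decide, by decide, by decide⟩
  · intro f hf g hg
    simp only [Set.mem_insert_iff, Set.mem_singleton_iff] at hf hg
    rcases hf with rfl | rfl | rfl <;> rcases hg with rfl | rfl | rfl <;>
      exact ⟨by decide, by decide⟩
end

section
/- Let S ⊆ G^n = F_2^{2n} be self-dual with coordinates partitioned among parties M, |M| ≥ 3, full local ranks, and let p = dim(S) − dim(S_loc), where S_loc = Σ_α S_{α̂}. Fix S_ent with S = S_loc ⊕ S_ent, a basis ḡ_1,...,ḡ_p of S_ent, and for each α a dual basis g_{α1},...,g_{αp} of L_α = {f ∈ G^n_α : ω(f, S_loc)=0} satisfying ω(g_{αj}, ḡ_k) = δ_{jk}. Then for every pair of distinct parties α, β and every j, the vector g_{αβ j} = g_{αj} + g_{βj} belongs to S (indeed to S_loc). -/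
/-- In the GHZ-extraction setup with `|M| ≥ 3`, for any basis
`ḡ` of `S_ent` and dual bases `g_α` of `L_α` (with `ω(g_{αj}, ḡ_k) = δ_{jk}`),
the vectors `g_{αj} + g_{βj}` (for distinct parties `α ≠ β`) belong to `S_loc`,
and in particular to `S`. -/
theorem two_local_vectors_mem {n : ℕ} {M : Type*} [Fintype M] [DecidableEq M]
    (party : Fin n → M) (hM : 3 ≤ Fintype.card M)
    (S Sent : Submodule (ZMod 2) (PV (Fin n)))
    (hsd : S = LinearMap.BilinForm.orthogonal (sympForm (Fin n)) S)
    (hfull : ∀ α, S ⊓ localSub party α = ⊥)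
    (hsum : Sloc S party ⊔ Sent = S)
    (hdisj : Sloc S party ⊓ Sent = ⊥)
    (p : ℕ)
    (hp : p = Module.finrank (ZMod 2) S - Module.finrank (ZMod 2) (Sloc S party))
    (gbar : Fin p → PV (Fin n)) (hgbar : ∀ j, gbar j ∈ Sent)
    (hgbar_ind : LinearIndependent (ZMod 2) gbar)
    (hgbar_span : Submodule.span (ZMod 2) (Set.range gbar) = Sent)
    (g : M → Fin p → PV (Fin n)) (hg : ∀ α j, g α j ∈ Lsub S party α)
    (hdual : ∀ α j k, sympForm (Fin n) (g α j) (gbar k) = if j = k then 1 else 0) :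
    ∀ α β, α ≠ β → ∀ j,
      g α j + g β j ∈ Sloc S party ∧ g α j + g β j ∈ S := by
  have hsymm : ∀ f h : PV (Fin n), sympForm (Fin n) f h = sympForm (Fin n) h f := by
    intro f h
    simp only [sympForm, LinearMap.mk₂_apply]
    exact Finset.sum_congr rfl fun j _ => by ring
  intro α β hab j
  -- Step 1: g α j + g β j ∈ S
  have hmemS : g α j + g β j ∈ S := by
    rw [hsd, LinearMap.BilinForm.mem_orthogonal_iff]
    intro s hs
    rw [← hsum] at hs
    obtain ⟨u, hu, v, hv, rfl⟩ := Submodule.mem_sup.mp hs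
    have hu' : ∀ γ, sympForm (Fin n) u (g γ j) = 0 := fun γ => (hg γ j).2 u hu
    have hv' : ∀ w ∈ Submodule.span (ZMod 2) (Set.range gbar),
        sympForm (Fin n) w (g α j + g β j) = 0 := by
      intro w hw
      induction hw using Submodule.span_induction with
      | mem w hw =>
        obtain ⟨k, rfl⟩ := hw
        rw [map_add, hsymm _ (g α j), hsymm _ (g β j), hdual, hdual]
        by_cases hjk : j = k <;> simp only [hjk, if_pos, if_neg, ite_true, ite_false] <;> decide
      | zero => simp
      | add x y _ _ hx hy =>
        rw [map_add (sympForm (Fin n)) x y, LinearMap.add_apply, hx, hy, add_zero]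
      | smul c x _ hx =>
        rw [map_smul, LinearMap.smul_apply, hx, smul_zero]
    rw [← hgbar_span] at hv
    show sympForm (Fin n) (u + v) (g α j + g β j) = 0
    rw [map_add (sympForm (Fin n)) u v, LinearMap.add_apply, hv' v hv, add_zero,
      map_add, hu', hu', add_zero]
  refine ⟨?_, hmemS⟩
  -- Step 2: find a third party γ
  obtain ⟨γ, hγ⟩ : ∃ γ : M, γ ∉ ({α, β} : Finset M) := by
    by_contra hc
    push_neg at hc
    have h2 := Finset.card_le_card (fun x _ => hc x : (Finset.univ : Finset M) ⊆ {α, β})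
    have h3 : ({α, β} : Finset M).card ≤ 2 :=
      (Finset.card_insert_le _ _).trans (by simp)
    simp only [Finset.card_univ] at h2
    omega
  simp only [Finset.mem_insert, Finset.mem_singleton, not_or] at hγ
  have hz : ∀ jj, party jj = γ → (g α j + g β j) jj = 0 := by
    intro jj hjj
    have ha : g α j jj = 0 := (hg α j).1 jj (by rw [hjj]; exact hγ.1)
    have hb : g β j jj = 0 := (hg β j).1 jj (by rw [hjj]; exact hγ.2)
    simp [ha, hb]
  have hcol : g α j + g β j ∈ colocalSub S party γ := ⟨hmemS, hz⟩
  exact (le_iSup (fun δ => colocalSub S party δ) γ) hcol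
end
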